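/- arXiv:1811.10603 — 3 statements merged into one kernel-verified Lean document; each statement's English description precedes it below -/
import Mathlib

section
/- For x ∈ [-π, π], the integral of the sine-skewed cardioid density from -π to x equals F(x) = 1/2 + (1/(2π))(x - λ(cos x + 1) + ρ sin x - (λρ/4)(cos 2x - 1)). -/
open Real MeasureTheory

/-- The formula uses `sin t cos t = sin (2t) / 2`, whose primitive is `-cos (2t) / 4`. -/
noncomputable def sineSkewedCardioidPrimitive (a b t : ℝ) : ℝ :=
  t - a * cos t + b * sin t - a * b / 4 * cos (2 * t)

theorem hasDerivAt_sineSkewedCardioidPrimitive (a b t : ℝ) :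
    HasDerivAt (sineSkewedCardioidPrimitive a b) ((1 + a * sin t) * (1 + b * cos t)) t := by
  have hcos2 : HasDerivAt (fun t => cos (2 * t)) (-sin (2 * t) * 2) t := by
    simpa [Function.comp_def, mul_comm] using
      (hasDerivAt_cos (2 * t)).comp t ((hasDerivAt_id t).const_mul 2)
  have hprim : HasDerivAt (fun t => t - a * cos t + b * sin t - a * b / 4 * cos (2 * t))
      (1 - a * -sin t + b * cos t - a * b / 4 * (-sin (2 * t) * 2)) t :=
    (((hasDerivAt_id t).sub ((hasDerivAt_cos t).const_mul a)).add
      ((hasDerivAt_sin t).const_mul b)).sub (hcos2.const_mul (a * b / 4))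
  refine hprim.congr_deriv ?_
  rw [sin_two_mul]
  ring

theorem integral_one_add_mul_sin_mul_one_add_mul_cos (a b x y : ℝ) :
    ∫ t in x..y, (1 + a * sin t) * (1 + b * cos t)
      = sineSkewedCardioidPrimitive a b y - sineSkewedCardioidPrimitive a b x :=
  intervalIntegral.integral_eq_sub_of_hasDerivAt
    (fun t _ => hasDerivAt_sineSkewedCardioidPrimitive a b t)
    (Continuous.intervalIntegrable (by fun_prop) x y)

theorem ssc_cdf_general (lam rho : ℝ) (x : ℝ) :
    (∫ t in (-π)..x, (1 / (2 * π)) * (1 + lam * Real.sin t) * (1 + rho * Real.cos t))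
      = 1 / 2 + (1 / (2 * π)) * (x - lam * (Real.cos x + 1) + rho * Real.sin x
          - (lam * rho / 4) * (Real.cos (2 * x) - 1)) := by
  simp_rw [mul_assoc (1 / (2 * π))]
  rw [intervalIntegral.integral_const_mul, integral_one_add_mul_sin_mul_one_add_mul_cos]
  have hcos_two_mul_neg_pi : cos (2 * -π) = 1 := by
    rw [mul_neg, cos_neg, cos_two_pi]
  simp only [sineSkewedCardioidPrimitive, cos_neg, sin_neg, cos_pi, sin_pi, hcos_two_mul_neg_pi]
  field_simp
  ring

theorem ssc_cdf (lam rho : ℝ) (hlam : lam ∈ Set.Icc (-1 : ℝ) 1)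
    (hrho : rho ∈ Set.Icc (-1 : ℝ) 1) (x : ℝ) (hx : x ∈ Set.Icc (-π) π) :
    (∫ t in (-π)..x, (1 / (2 * π)) * (1 + lam * Real.sin t) * (1 + rho * Real.cos t))
      = 1 / 2 + (1 / (2 * π)) * (x - lam * (Real.cos x + 1) + rho * Real.sin x
          - (lam * rho / 4) * (Real.cos (2 * x) - 1)) :=
  ssc_cdf_general lam rho x
end

section
/- For real t with t ∉ {-2, -1, 0, 1, 2}, the characteristic function of the sine-skewed cardioid distribution is ψ(t) = (1/π)(1/t + λ/(i(t² - 1)) - ρt/(t² - 1) - λρ/(i(t² - 4))) sin(πt), i.e., (1/(2π)) ∫_{-π}^{π} e^{itx}(1 + λ sin x)(1 + ρ cos x) dx equals this expression. -/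
open Real MeasureTheory Complex

/-! Writing `sin x` and `cos x` through `exp (± x I)` turns the integrand into a combination of
`exp (I (t + k) x)` for `k = -2, …, 2`. Over `[-π, π]` each of these integrates to
`2 sin (π (t + k)) / (t + k) = ± 2 sin (π t) / (t + k)`, and the five terms recombine by partial
fractions. -/

theorem integral_exp_I_mul_symm (r a : ℝ) (ha : a ≠ 0) :
    ∫ x in -r..r, exp (I * a * x) = 2 * Complex.sin (a * r) / a := by
  have hsubst := intervalIntegral.integral_comp_mul_left (fun u : ℝ => exp (u * I))
    (a := -r) (b := r) ha
  rw [mul_neg, integral_exp_mul_I_eq_sin] at hsubst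
  rw [← ofReal_mul, ← ofReal_sin, div_eq_inv_mul, ← ofReal_inv, ← real_smul, ← hsubst]
  simp only [ofReal_mul, mul_comm I, mul_right_comm]

theorem exp_I_mul_mul_sin_cos (t x lam rho : ℂ) :
    exp (I * t * x) * ((1 + lam * sin x) * (1 + rho * cos x))
      = exp (I * t * x) + (rho - lam * I) / 2 * exp (I * (t + 1) * x)
        + (rho + lam * I) / 2 * exp (I * (t - 1) * x)
        - lam * rho * I / 4 * exp (I * (t + 2) * x)
        + lam * rho * I / 4 * exp (I * (t - 2) * x) := by
  have hsin : sin x = (exp (-x * I) - exp (x * I)) * I / 2 := by rw [← two_sin]; ring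
  have hcos : cos x = (exp (x * I) + exp (-x * I)) / 2 := by rw [← two_cos]; ring
  have hshift (s y : ℂ) (hs : s = I * t * x + y) : exp s = exp (I * t * x) * exp y := by
    rw [hs, Complex.exp_add]
  rw [hsin, hcos, hshift (I * (t + 1) * x) (x * I) (by ring),
    hshift (I * (t - 1) * x) (-x * I) (by ring),
    hshift (I * (t + 2) * x) (x * I + x * I) (by ring),
    hshift (I * (t - 2) * x) (-x * I + -x * I) (by ring), Complex.exp_add, Complex.exp_add]
  ring

theorem sine_skewed_cardioid_partial_fractions (lam rho t S p : ℂ) (h0 : t ≠ 0)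
    (h1 : t + 1 ≠ 0) (h2 : t - 1 ≠ 0) (h3 : t + 2 ≠ 0) (h4 : t - 2 ≠ 0) :
    1 / (2 * p) * (2 * S / t + (rho - lam * I) / 2 * (2 * -S / (t + 1))
      + (rho + lam * I) / 2 * (2 * -S / (t - 1)) - lam * rho * I / 4 * (2 * S / (t + 2))
      + lam * rho * I / 4 * (2 * S / (t - 2)))
    = 1 / p * (1 / t + lam / (I * (t ^ 2 - 1)) - rho * t / (t ^ 2 - 1)
      - lam * rho / (I * (t ^ 2 - 4))) * S := by
  rw [show t ^ 2 - 1 = (t + 1) * (t - 1) by ring, show t ^ 2 - 4 = (t + 2) * (t - 2) by ring]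
  field_simp
  ring_nf
  rw [I_sq]
  ring

theorem ssc_char_fun_general (lam rho : ℝ) (t : ℝ)
    (ht : t ∉ ({-2, -1, 0, 1, 2} : Set ℝ)) :
    (1 / (2 * (π : ℂ))) * ∫ x in (-π)..π,
        Complex.exp (Complex.I * t * x) *
          ((1 + (lam : ℂ) * Real.sin x) * (1 + (rho : ℂ) * Real.cos x))
      = (1 / (π : ℂ)) * ((1 / (t : ℂ)) + (lam : ℂ) / (Complex.I * ((t : ℂ) ^ 2 - 1))
          - (rho : ℂ) * t / ((t : ℂ) ^ 2 - 1)
          - (lam : ℂ) * rho / (Complex.I * ((t : ℂ) ^ 2 - 4)))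
        * Complex.sin (π * t) := by
  simp only [Set.mem_insert_iff, Set.mem_singleton_iff, not_or] at ht
  obtain ⟨ht_neg_two, ht_neg_one, ht_zero, ht_one, ht_two⟩ := ht
  have ht_add_one : t + 1 ≠ 0 := by contrapose! ht_neg_one; linarith
  have ht_sub_one : t - 1 ≠ 0 := sub_ne_zero.2 ht_one
  have ht_add_two : t + 2 ≠ 0 := by contrapose! ht_neg_two; linarith
  have ht_sub_two : t - 2 ≠ 0 := sub_ne_zero.2 ht_two
  have i0 := integral_exp_I_mul_symm π t ht_zero
  have ip1 := integral_exp_I_mul_symm π (t + 1) ht_add_one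
  have im1 := integral_exp_I_mul_symm π (t - 1) ht_sub_one
  have ip2 := integral_exp_I_mul_symm π (t + 2) ht_add_two
  have im2 := integral_exp_I_mul_symm π (t - 2) ht_sub_two
  push_cast at ip1 im1 ip2 im2
  simp only [ofReal_sin, ofReal_cos, exp_I_mul_mul_sin_cos]
  simp (disch := exact Continuous.intervalIntegrable (by fun_prop) _ _) only
    [intervalIntegral.integral_add, intervalIntegral.integral_sub,
      intervalIntegral.integral_const_mul]
  rw [i0, ip1, im1, ip2, im2]
  simp only [add_mul, sub_mul, one_mul, Complex.sin_add_pi, Complex.sin_sub_pi,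
    Complex.sin_add_two_pi, Complex.sin_sub_two_pi]
  rw [mul_comm (π : ℂ)]
  apply sine_skewed_cardioid_partial_fractions <;> exact_mod_cast ‹_›

theorem ssc_char_fun (lam rho : ℝ) (hlam : lam ∈ Set.Icc (-1 : ℝ) 1)
    (hrho : rho ∈ Set.Icc (-1 : ℝ) 1) (t : ℝ)
    (ht : t ∉ ({-2, -1, 0, 1, 2} : Set ℝ)) :
    (1 / (2 * (π : ℂ))) * ∫ x in (-π)..π,
        Complex.exp (Complex.I * t * x) *
          ((1 + (lam : ℂ) * Real.sin x) * (1 + (rho : ℂ) * Real.cos x))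
      = (1 / (π : ℂ)) * ((1 / (t : ℂ)) + (lam : ℂ) / (Complex.I * ((t : ℂ) ^ 2 - 1))
          - (rho : ℂ) * t / ((t : ℂ) ^ 2 - 1)
          - (lam : ℂ) * rho / (Complex.I * ((t : ℂ) ^ 2 - 4)))
        * Complex.sin (π * t) :=
  ssc_char_fun_general lam rho t ht
end

section
/- With F the sine-skewed cardioid cdf, lim_{x→π⁻} ((π - x) F′(x))/(1 - F(x)) = 1, so F satisfies the von Mises condition for the Weibull domain of attraction with index 1 at its upper endpoint π. -/
/-!
Since `F π = 1`, the ratio is `f x` divided by the left difference quotient `(1 - F x) / (π - x)`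
of `F` at `π`. Both tend to `F' π = f π = (1 - ρ) / (2π)`, which is nonzero because `ρ < 1`.
-/

open Real Filter Topology

theorem tendsto_vonMises_ratio_of_hasDerivWithinAt {f F : ℝ → ℝ} {b c : ℝ} (hc : c ≠ 0)
    (hFb : F b = 1) (hF : HasDerivWithinAt F c (Set.Iio b) b)
    (hf : Tendsto f (𝓝[<] b) (𝓝 c)) :
    Tendsto (fun x => (b - x) * f x / (1 - F x)) (𝓝[<] b) (𝓝 1) := by
  have hslope : Tendsto (fun x => (1 - F x) / (b - x)) (𝓝[<] b) (𝓝 c) := by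
    have h := hasDerivWithinAt_iff_tendsto_slope.mp hF
    rw [Set.sdiff_singleton_eq_self Set.self_notMem_Iio] at h
    refine h.congr fun x => ?_
    rw [slope_def_field, hFb, ← neg_div_neg_eq, neg_sub, neg_sub]
  have h := hf.div hslope hc
  rw [div_self hc] at h
  refine h.congr fun x => ?_
  simp only [Pi.div_apply]
  rw [div_div_eq_mul_div, mul_comm]

theorem hasDerivAt_sineSkewedCardioid_cdf (lam rho x : ℝ) :
    HasDerivAt (fun x => 1 / 2 + (1 / (2 * π)) * (x - lam * (Real.cos x + 1)
        + rho * Real.sin x - (lam * rho / 4) * (Real.cos (2 * x) - 1)))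
      ((1 / (2 * π)) * (1 + lam * Real.sin x) * (1 + rho * Real.cos x)) x := by
  have hcos2 : HasDerivAt (fun x : ℝ => Real.cos (2 * x)) (-Real.sin (2 * x) * 2) x :=
    (Real.hasDerivAt_cos (2 * x)).comp x ((hasDerivAt_id x).const_mul 2) |>.congr_deriv
      (by ring)
  have h := ((((hasDerivAt_id' x).sub (((Real.hasDerivAt_cos x).add_const 1).const_mul lam)).add
    ((Real.hasDerivAt_sin x).const_mul rho)).sub
    ((hcos2.sub_const 1).const_mul (lam * rho / 4))).const_mul (1 / (2 * π)) |>.const_add (1 / 2)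
  exact h.congr_deriv (by rw [Real.sin_two_mul]; ring)

theorem ssc_von_mises_general (lam rho : ℝ)
    (hrho : rho ∈ Set.Ioo (-1 : ℝ) 1)
    (f F : ℝ → ℝ)
    (hf : ∀ x, f x = (1 / (2 * π)) * (1 + lam * Real.sin x) * (1 + rho * Real.cos x))
    (hF : ∀ x, F x = 1 / 2 + (1 / (2 * π)) * (x - lam * (Real.cos x + 1)
        + rho * Real.sin x - (lam * rho / 4) * (Real.cos (2 * x) - 1))) :
    Tendsto (fun x => (π - x) * f x / (1 - F x)) (𝓝[<] π) (𝓝 1) := by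
  have hfπ : f π ≠ 0 := by
    have : 0 < 1 - rho := by linarith [hrho.2]
    rw [hf, Real.sin_pi, Real.cos_pi, mul_zero, add_zero, mul_one, mul_neg_one,
      ← sub_eq_add_neg]
    exact (mul_pos (by positivity) this).ne'
  have hFπ : F π = 1 := by
    rw [hF, Real.cos_pi, Real.sin_pi, Real.cos_two_pi]
    field_simp
    ring
  have hderiv : HasDerivAt F (f π) π := by
    rw [funext hF, hf]
    exact hasDerivAt_sineSkewedCardioid_cdf lam rho π
  have hcont : Continuous f := by
    rw [funext hf]
    fun_prop
  exact tendsto_vonMises_ratio_of_hasDerivWithinAt hfπ hFπ hderiv.hasDerivWithinAt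
    ((hcont.tendsto π).mono_left nhdsWithin_le_nhds)

theorem ssc_von_mises (lam rho : ℝ) (hlam : lam ∈ Set.Ioo (-1 : ℝ) 1)
    (hrho : rho ∈ Set.Ioo (-1 : ℝ) 1)
    (f F : ℝ → ℝ)
    (hf : ∀ x, f x = (1 / (2 * π)) * (1 + lam * Real.sin x) * (1 + rho * Real.cos x))
    (hF : ∀ x, F x = 1 / 2 + (1 / (2 * π)) * (x - lam * (Real.cos x + 1)
        + rho * Real.sin x - (lam * rho / 4) * (Real.cos (2 * x) - 1))) :
    Tendsto (fun x => (π - x) * f x / (1 - F x)) (𝓝[<] π) (𝓝 1) :=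
  ssc_von_mises_general lam rho hrho f F hf hF
end
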